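/- arXiv:2401.00382 — 2 statements merged into one kernel-verified Lean document; each statement's English description precedes it below -/
import Mathlib

section
/- Let X be a topological vector space over K (K = ℝ or ℂ), M a subset of X, and α a cardinal with α ≥ ℵ₀ and w(X) ≤ α. Then M is pointwise α-dense-lineable if, and only if, M is α-infinitely pointwise α-dense-lineable. -/
/-!
Take a dense `α`-dimensional subspace `Y ⊆ M ∪ {0}` through `x`. Since `w(X) ≤ α`, there are
nonempty open sets `U i`, indexed by a well-order of type `α` (so initial segments have fewer than
`α` elements), such that every set meeting all of them is dense; pick `d i ∈ Y ∩ U i`. Choose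
pairwise distinct vectors `e (κ, i)` of a basis of `Y` avoiding the supports of `x` and of all
`d μ` with `μ ≤ i` (fewer than `α` coordinates), and `t ≠ 0` so small that
`w (κ, i) = d i + t • e (κ, i) ∈ U i`. In a linear relation between `x` and the `w`, the
coordinate `e p₀` for `p₀` with largest second component only sees `w p₀`, so the `w` are linearly
independent modulo `span {x}`. Hence the subspaces `span ({x} ∪ {w (κ, i) | i})` are dense,
`α`-dimensional, and pairwise meet in `span {x}`.
-/

universe u

open Cardinal

/-- The weight of a topological space: the smallest cardinality of a basis for its topology. -/
noncomputable def tsWeight (X : Type u) [TopologicalSpace X] : Cardinal.{u} :=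
  sInf { c : Cardinal.{u} | ∃ B : Set (Set X),
    TopologicalSpace.IsTopologicalBasis B ∧ #↥B = c }

variable (𝕜 : Type) [RCLike 𝕜] {X : Type u} [AddCommGroup X] [Module 𝕜 X] [TopologicalSpace X]

/-- `M` is pointwise `α`-dense-lineable: for each `x ∈ M` there is a dense linear subspace `Y`
of `X` with `dim Y = α` and `x ∈ Y ⊆ M ∪ {0}`. -/
def PointwiseDenseLineable (M : Set X) (α : Cardinal.{u}) : Prop :=
  ∀ x ∈ M, ∃ Y : Submodule 𝕜 X, x ∈ Y ∧ Dense (Y : Set X) ∧ Module.rank 𝕜 Y = α ∧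
    (Y : Set X) ⊆ M ∪ {0}

/-- `M` is `α`-infinitely pointwise `β`-dense-lineable: for each `x ∈ M` there is a family
`{Y_κ}_{κ<α}` of `β`-dimensional dense linear subspaces with `x ∈ Y_κ ⊆ M ∪ {0}` and
`Y_{κ₁} ∩ Y_{κ₂} = span {x}` whenever `κ₁ ≠ κ₂`. -/
def InfPointwiseDenseLineable (M : Set X) (α β : Cardinal.{u}) : Prop :=
  ∀ x ∈ M, ∃ (ι : Type u) (Y : ι → Submodule 𝕜 X), #ι = α ∧
    (∀ i, x ∈ Y i ∧ Dense (Y i : Set X) ∧ Module.rank 𝕜 (Y i) = β ∧ (Y i : Set X) ⊆ M ∪ {0}) ∧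
    ∀ i j, i ≠ j → Y i ⊓ Y j = Submodule.span 𝕜 {x}

open Set Function Submodule Topology

theorem Cardinal.mk_biUnion_lt_of_finite {ι β : Type u} {c : Cardinal.{u}} (hc : ℵ₀ ≤ c)
    {s : Set ι} (hs : #s < c) {A : ι → Set β} (hA : ∀ i, (A i).Finite) :
    #(⋃ i ∈ s, A i) < c := by
  rcases hc.eq_or_lt with rfl | hc
  · exact ((lt_aleph0_iff_set_finite.1 hs).biUnion fun i _ => hA i).lt_aleph0
  · calc #(⋃ i ∈ s, A i) ≤ #s * ⨆ i : s, #(A i) := mk_biUnion_le A s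
      _ ≤ #s * ℵ₀ := by gcongr; exact ciSup_le' fun i => (hA i).lt_aleph0.le
      _ < c := mul_lt_of_lt hc.le hs hc

theorem exists_injective_prod_notMem {ι J : Type u} (hJ : ℵ₀ ≤ #J) (hι : #ι ≤ #J)
    {S : ι → Set J} (hS : ∀ i, #(S i) < #J) :
    ∃ Φ : ι × ι → J, Injective Φ ∧ ∀ p, Φ p ∉ S p.2 := by
  have : Infinite J := infinite_iff.2 hJ
  obtain ⟨E⟩ : Nonempty (J × J ≃ J) := Cardinal.eq.1 (by simp [mul_eq_self hJ])
  obtain ⟨g⟩ := (le_def ι J).1 hι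
  have hrow : ∀ i, #ι ≤ #(((E ∘ Prod.mk (g i)) ⁻¹' S i)ᶜ : Set J) := fun i => by
    rw [mk_compl_of_infinite _ <| (mk_preimage_of_injective _ _
      (E.injective.comp (Prod.mk_right_injective (g i)))).trans_lt (hS i)]
    exact hι
  -- `Φ (κ, i)` is taken from the row `E (g i, ·)`, of which `S i` excludes fewer than `#J` entries.
  have ψ : ∀ i, ι ↪ (((E ∘ Prod.mk (g i)) ⁻¹' S i)ᶜ : Set J) :=
    fun i => ((le_def _ _).1 (hrow i)).some
  refine ⟨fun p => E (g p.2, ψ p.2 p.1), fun ⟨κ, i⟩ ⟨κ', i'⟩ h => ?_, fun p => (ψ p.2 p.1).2⟩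
  obtain rfl : i = i' := g.injective (congrArg Prod.fst (E.injective h))
  exact congrArg (·, i) ((ψ i).injective (Subtype.ext (congrArg Prod.snd (E.injective h))))

theorem exists_ne_zero_add_smul_mem {K E : Type*} [NontriviallyNormedField K] [AddCommMonoid E]
    [Module K E] [TopologicalSpace E] [ContinuousAdd E] [ContinuousSMul K E] {U : Set E}
    (hU : IsOpen U) {y : E} (hy : y ∈ U) (v : E) : ∃ s : K, s ≠ 0 ∧ y + s • v ∈ U := by
  have hnhds : ∀ᶠ s in 𝓝[≠] (0 : K), y + s • v ∈ U :=
    nhdsWithin_le_nhds <| (continuous_const.add (continuous_id.smul continuous_const)).continuousAt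
      |>.preimage_mem_nhds (by simpa using hU.mem_nhds hy)
  obtain ⟨s, hsU, hs⟩ := (hnhds.and self_mem_nhdsWithin).exists
  exact ⟨s, hs, hsU⟩

theorem exists_isTopologicalBasis_mk_eq_tsWeight (X : Type u) [TopologicalSpace X] :
    ∃ B : Set (Set X), TopologicalSpace.IsTopologicalBasis B ∧ #B = tsWeight X :=
  csInf_mem (s := {c | ∃ B : Set (Set X), TopologicalSpace.IsTopologicalBasis B ∧ #B = c})
    ⟨_, _, TopologicalSpace.isTopologicalBasis_opens, rfl⟩

theorem exists_piBase_of_tsWeight_le {X ι : Type u} [TopologicalSpace X] [Nonempty X]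
    (h : tsWeight X ≤ #ι) :
    ∃ U : ι → Set X, (∀ i, IsOpen (U i) ∧ (U i).Nonempty) ∧
      ∀ D : Set X, (∀ i, (U i ∩ D).Nonempty) → Dense D := by
  obtain ⟨B, hB, hBcard⟩ := exists_isTopologicalBasis_mk_eq_tsWeight X
  let B' := {V ∈ B | V.Nonempty}
  have : Nonempty B' := by
    obtain ⟨V, hVB, hV, -⟩ := hB.exists_subset_of_mem_open (mem_univ (Classical.arbitrary X))
      isOpen_univ
    exact ⟨⟨V, hVB, _, hV⟩⟩
  obtain ⟨f⟩ := (le_def B' ι).1 ((mk_le_mk_of_subset (sep_subset _ _)).trans (hBcard ▸ h))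
  let u : ι → B' := invFun f
  refine ⟨fun i => u i, fun i => ⟨hB.isOpen (u i).2.1, (u i).2.2⟩,
    fun D hD => dense_iff_inter_open.2 fun V hV ⟨v, hv⟩ => ?_⟩
  obtain ⟨W, hWB, hvW, hWV⟩ := hB.exists_subset_of_mem_open hv hV
  obtain ⟨i, hi⟩ : ∃ i, u i = ⟨W, hWB, v, hvW⟩ := invFun_surjective f.injective _
  obtain ⟨y, hyU, hyD⟩ := hD i
  exact ⟨y, hWV (by simpa [hi] using hyU), hyD⟩

theorem Module.Basis.linearIndependent_mkQ_add_smul {K V ι J : Type*} [Ring K] [NoZeroDivisors K]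
    [AddCommGroup V] [Module K V] [LinearOrder ι] (b : Module.Basis J K V) {x : V} {d : ι → V}
    {Φ : ι × ι → J} (hΦ : Function.Injective Φ) (hx : ∀ p, b.repr x (Φ p) = 0)
    (hd : ∀ p μ, μ ≤ p.2 → b.repr (d μ) (Φ p) = 0) {t : ι × ι → K} (ht : ∀ p, t p ≠ 0) :
    LinearIndependent K ((K ∙ x).mkQ ∘ fun p => d p.2 + t p • b (Φ p)) := by
  rw [linearIndependent_iff]
  intro l hl
  rw [← Finsupp.apply_linearCombination, mkQ_apply, Quotient.mk_eq_zero,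
    mem_span_singleton] at hl
  obtain ⟨c, hc⟩ := hl
  by_contra hl0
  obtain ⟨p₀, hp₀, hmax⟩ :=
    l.support.exists_max_image Prod.snd (Finsupp.support_nonempty_iff.2 hl0)
  have hcoord : ∀ p ∈ l.support,
      b.coord (Φ p₀) (d p.2 + t p • b (Φ p)) = if p = p₀ then t p else 0 := fun p hp => by
    classical
    simp only [coord_apply, map_add, map_smul, repr_self, hd p₀ p.2 (hmax p hp),
      Finsupp.single_apply, hΦ.eq_iff]
    split_ifs <;> simp
  have h₀ := congrArg (b.coord (Φ p₀)) hc
  rw [map_smul, coord_apply, hx, smul_zero, Finsupp.linearCombination_apply, map_finsuppSum,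
    Finsupp.sum_eq_single p₀ (fun p hp hpp => by
      rw [map_smul, hcoord p (Finsupp.mem_support_iff.2 hp), if_neg hpp, smul_zero])
      (fun _ => by rw [zero_smul, map_zero]),
    map_smul, hcoord p₀ hp₀, if_pos rfl, smul_eq_mul] at h₀
  exact Finsupp.mem_support_iff.1 hp₀ ((mul_eq_zero.1 h₀.symm).resolve_right (ht p₀))

theorem exists_linearIndependent_mkQ_add_smul {K : Type*} {V ι : Type u} [DivisionRing K]
    [AddCommGroup V] [Module K V] [LinearOrder ι] (hV : ℵ₀ ≤ Module.rank K V)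
    (hι : #ι ≤ Module.rank K V) (hIic : ∀ i : ι, #(Iic i) < Module.rank K V) (x : V)
    (d : ι → V) :
    ∃ e : ι × ι → V, ∀ t : ι × ι → K, (∀ p, t p ≠ 0) →
      LinearIndependent K ((K ∙ x).mkQ ∘ fun p => d p.2 + t p • e p) := by
  let b := Module.Basis.ofVectorSpace K V
  rw [← b.mk_eq_rank''] at hV hι hIic
  let S i : Set (Module.Basis.ofVectorSpaceIndex K V) :=
    ↑(b.repr x).support ∪ ⋃ μ ∈ Iic i, ↑(b.repr (d μ)).support
  have hS : ∀ i, #(S i) < #_ := fun i =>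
    (mk_union_le _ _).trans_lt <| add_lt_of_lt hV
      ((b.repr x).support.finite_toSet.lt_aleph0.trans_le hV)
      (mk_biUnion_lt_of_finite hV (hIic i) fun μ => (b.repr (d μ)).support.finite_toSet)
  obtain ⟨Φ, hΦ, hΦS⟩ := exists_injective_prod_notMem hV hι hS
  refine ⟨b ∘ Φ, fun t ht => b.linearIndependent_mkQ_add_smul hΦ (fun p => ?_)
    (fun p μ hμ => ?_) ht⟩
  · exact Finsupp.notMem_support_iff.1 fun h => hΦS p (Or.inl h)
  · exact Finsupp.notMem_support_iff.1 fun h => hΦS p (Or.inr (mem_biUnion hμ h))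

theorem LinearIndependent.span_insert_inf_span_insert {K V ι κ : Type*} [DivisionRing K]
    [AddCommGroup V] [Module K V] {x : V} {w : κ × ι → V}
    (hw : LinearIndependent K ((K ∙ x).mkQ ∘ w)) {k k' : κ} (hk : k ≠ k') :
    span K (insert x (range fun i => w (k, i))) ⊓ span K (insert x (range fun i => w (k', i))) =
      K ∙ x := by
  have hmap : ∀ k, (span K (insert x (range fun i => w (k, i)))).map (K ∙ x).mkQ =
      span K ((K ∙ x).mkQ ∘ w '' range (Prod.mk k)) := fun k => by
    rw [map_span, image_insert_eq, mkQ_apply, (Quotient.mk_eq_zero _).2 (mem_span_singleton_self x),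
      span_insert_zero, ← range_comp, ← range_comp]
    rfl
  refine le_antisymm (fun y hy => ?_) (span_le.2 (singleton_subset_iff.2 ⟨subset_span
    (mem_insert x _), subset_span (mem_insert x _)⟩))
  rw [← ker_mkQ (K ∙ x), LinearMap.mem_ker]
  refine disjoint_def.1 (hw.disjoint_span_image (disjoint_range_iff.2 fun i j h => hk ?_))
    _ (hmap k ▸ mem_map_of_mem hy.1) (hmap k' ▸ mem_map_of_mem hy.2)
  exact congrArg Prod.fst h

theorem LinearIndependent.rank_span_insert {K : Type*} {V ι κ : Type u} [DivisionRing K]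
    [AddCommGroup V] [Module K V] {x : V} {w : κ × ι → V}
    (hw : LinearIndependent K ((K ∙ x).mkQ ∘ w)) (hι : ℵ₀ ≤ #ι) (k : κ) :
    Module.rank K (span K (insert x (range fun i => w (k, i)))) = #ι := by
  have hwk : LinearIndependent K fun i => w (k, i) :=
    (hw.comp _ (Prod.mk_right_injective k)).of_comp _
  refine le_antisymm ?_ ?_
  · calc _ ≤ #(insert x (range fun i => w (k, i)) : Set V) := rank_span_le _
      _ ≤ #ι + 1 := mk_insert_le.trans (add_le_add_left mk_range_le 1)
      _ = #ι := add_one_eq hι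
  · calc #ι = Module.rank K (span K (range fun i => w (k, i))) := by
          rw [rank_span hwk, mk_range_eq _ hwk.injective]
      _ ≤ _ := rank_mono (span_mono (subset_insert _ _))

theorem Dense.exists_submodule_family_inf_eq_span {K : Type*} {E ι : Type u}
    [NontriviallyNormedField K] [AddCommGroup E] [Module K E] [TopologicalSpace E]
    [ContinuousAdd E] [ContinuousSMul K E] [LinearOrder ι] {Y : Submodule K E}
    (hY : Dense (Y : Set E)) (hι : #ι = Module.rank K Y) (hιinf : ℵ₀ ≤ #ι)
    (hIic : ∀ i : ι, #(Iic i) < #ι) (hw : tsWeight E ≤ #ι) {x : E} (hx : x ∈ Y) :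
    ∃ Z : ι → Submodule K E, (∀ k, x ∈ Z k ∧ Dense (Z k : Set E) ∧
      Module.rank K (Z k) = #ι ∧ Z k ≤ Y) ∧ ∀ k k', k ≠ k' → Z k ⊓ Z k' = K ∙ x := by
  obtain ⟨U, hU, hUdense⟩ := exists_piBase_of_tsWeight_le hw
  choose d hdU hdY using fun i => hY.inter_open_nonempty (U i) (hU i).1 (hU i).2
  obtain ⟨e, he⟩ := exists_linearIndependent_mkQ_add_smul (hι ▸ hιinf) hι.le (hι ▸ hIic)
    (⟨x, hx⟩ : Y) fun i => ⟨d i, hdY i⟩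
  choose t ht htU using fun p : ι × ι =>
    exists_ne_zero_add_smul_mem (K := K) (hU p.2).1 (hdU p.2) (e p : E)
  have hind := he t ht
  set w : ι × ι → Y := fun p => ⟨d p.2, hdY p.2⟩ + t p • e p
  let Z k : Submodule K Y := span K (insert ⟨x, hx⟩ (range fun i => w (k, i)))
  have hwZ : ∀ k i, (w (k, i) : E) ∈ (Z k).map Y.subtype := fun k i =>
    mem_map_of_mem (subset_span (mem_insert_of_mem _ (mem_range_self i)))
  refine ⟨fun k => (Z k).map Y.subtype, fun k => ⟨mem_map_of_mem (subset_span (mem_insert _ _)),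
    hUdense _ fun i => ?_, ?_, map_subtype_le _ _⟩, fun k k' hk => ?_⟩
  · exact ⟨w (k, i), htU (k, i), hwZ k i⟩
  · rw [← LinearEquiv.rank_eq (equivMapOfInjective _ Y.injective_subtype _),
      hind.rank_span_insert hιinf]
  · rw [← map_inf _ Y.injective_subtype, hind.span_insert_inf_span_insert hk, map_span,
      image_singleton]
    rfl

/-- Let `X` be a topological vector space over `𝕜` (`𝕜 = ℝ` or `ℂ`), `M ⊆ X`
and `α ≥ ℵ₀` a cardinal with `w(X) ≤ α`.  Then `M` is pointwise `α`-dense-lineable iff `M` is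
`α`-infinitely pointwise `α`-dense-lineable. -/
theorem stmt6 [IsTopologicalAddGroup X] [ContinuousSMul 𝕜 X] (M : Set X) (α : Cardinal.{u})
    (hα : Cardinal.aleph0 ≤ α) (hw : tsWeight X ≤ α) :
    PointwiseDenseLineable 𝕜 M α ↔ InfPointwiseDenseLineable 𝕜 M α α := by
  have hι : #α.ord.ToType = α := by simp
  refine ⟨fun hM x hx => ?_, fun hM x hx => ?_⟩
  · obtain ⟨Y, hxY, hY, hYrank, hYM⟩ := hM x hx
    have hIic (i : α.ord.ToType) : #(Iic i) < #α.ord.ToType :=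
      mk_Iic_lt i (by simp) (hα.trans hι.ge)
    obtain ⟨Z, hZ, hZinf⟩ := hY.exists_submodule_family_inf_eq_span (hι.trans hYrank.symm)
      (hα.trans hι.ge) hIic (hw.trans hι.ge) hxY
    exact ⟨_, Z, hι, fun k => ⟨(hZ k).1, (hZ k).2.1, (hZ k).2.2.1.trans hι,
      (SetLike.coe_subset_coe.2 (hZ k).2.2.2).trans hYM⟩, hZinf⟩
  · obtain ⟨ι, Y, hι, hY, -⟩ := hM x hx
    have : Nonempty ι := mk_ne_zero_iff.1 (hι ▸ (aleph0_pos.trans_le hα).ne')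
    exact ⟨Y (Classical.arbitrary ι), hY (Classical.arbitrary ι)⟩
end

section
/- Let X be a commutative topological α-generated algebra over K (K = ℝ or ℂ) and M a subset of X. If X is first-countable and α ≥ ℵ₀, then M is α-infinitely strongly α-dense-algebrable if, and only if, M is strongly α-dense-algebrable. -/
universe u

open Cardinal

variable (𝕜 : Type) [RCLike 𝕜] {X : Type} [NonUnitalCommRing X] [Module 𝕜 X]
  [SMulCommClass 𝕜 X X] [IsScalarTower 𝕜 X X]

/-- `S` is a set of free generators (SFG): for every `n`, every nonzero polynomial `P` in `n`
variables with no constant term and all pairwise distinct `x₁, …, x_n ∈ S` one has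
`P(x₁, …, x_n) ≠ 0`.  (The evaluation of a polynomial with no constant term at elements of the
non-unital algebra `X` is performed inside the unitization of `X`, where it lands in the copy
of `X`.) -/
def IsSFG (S : Set X) : Prop :=
  ∀ (n : ℕ) (x : Fin n → X), (∀ i, x i ∈ S) → Function.Injective x →
    ∀ P : MvPolynomial (Fin n) 𝕜, P ≠ 0 → MvPolynomial.constantCoeff P = 0 →
      MvPolynomial.aeval (fun i => (x i : Unitization 𝕜 X)) P ≠ 0

/-- `M` is strongly `α`-dense-algebrable: there is a set of free generators `F` with `|F| = α`,
`⟨F⟩` dense in `X` and `⟨F⟩ ⊆ M ∪ {0}`. -/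
def StronglyDenseAlgebrable [TopologicalSpace X] (M : Set X) (α : Cardinal) : Prop :=
  ∃ F : Set X, IsSFG 𝕜 F ∧ #↥F = α ∧
    Dense ((NonUnitalAlgebra.adjoin 𝕜 F : NonUnitalSubalgebra 𝕜 X) : Set X) ∧
    ((NonUnitalAlgebra.adjoin 𝕜 F : NonUnitalSubalgebra 𝕜 X) : Set X) ⊆ M ∪ {0}

/-- `M` is `α`-infinitely strongly `β`-dense-algebrable: there is a family `{Y_κ}_{κ<α}` of
dense `β`-generated free subalgebras of `X` contained in `M ∪ {0}` with pairwise trivial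
intersections. -/
def InfStronglyDenseAlgebrable [TopologicalSpace X] (M : Set X) (α β : Cardinal) : Prop :=
  ∃ (ι : Type) (F : ι → Set X), #ι = α ∧
    (∀ i, IsSFG 𝕜 (F i) ∧ #↥(F i) = β ∧
      Dense ((NonUnitalAlgebra.adjoin 𝕜 (F i) : NonUnitalSubalgebra 𝕜 X) : Set X) ∧
      ((NonUnitalAlgebra.adjoin 𝕜 (F i) : NonUnitalSubalgebra 𝕜 X) : Set X) ⊆ M ∪ {0}) ∧
    ∀ i j, i ≠ j →
      NonUnitalAlgebra.adjoin 𝕜 (F i) ⊓ NonUnitalAlgebra.adjoin 𝕜 (F j) =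
        (⊥ : NonUnitalSubalgebra 𝕜 X)

/-!
A set `S` is free exactly when it is algebraically independent in the unitization, since a
polynomial vanishing at points of `X` has zero constant term. Start from a free `F` with `⟨F⟩` dense
in `X` and contained in `M ∪ {0}`. For every `κ ∈ F` perturb each `v ∈ F` into `v + t • w` with
`w = hd ((κ, n), v) ∈ F`, where `hd` is injective and raises a level function `lvl : F → ℕ`
(possible since `F ≃ F × ℕ` and `|F × F × ℕ| = |F|`). The substitution `X_r ↦ X_v + t X_w` is then
triangular with respect to `lvl`, so it has a polynomial left inverse and all perturbations
together stay free; the `κ`-slices are disjoint, so the algebras they generate meet only in `0`.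
By first countability the scalars `t` can be chosen with `v + t • w → v` as `n → ∞`, so each
slice generates a dense subalgebra of `⟨F⟩`.
-/

open MvPolynomial Function Set Filter Topology

section Shear

variable {K V ι : Type*} [Field K]

open Classical in
/-- Left inverse of the substitution `X i ↦ X (tl i) + c i • X (hd i)`. -/
noncomputable def unshear (lvl : V → ℕ) (tl hd : ι → V) (c : ι → K)
    (hlt : ∀ i, lvl (tl i) < lvl (hd i)) : V → MvPolynomial ι K := fun v =>
  if h : ∃ i, hd i = v then
    (c h.choose)⁻¹ • (MvPolynomial.X h.choose - unshear lvl tl hd c hlt (tl h.choose))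
  else 0
termination_by v => lvl v
decreasing_by simpa only [h.choose_spec] using hlt h.choose

theorem unshear_hd (lvl : V → ℕ) (tl : ι → V) {hd : ι → V} (c : ι → K)
    (hlt : ∀ i, lvl (tl i) < lvl (hd i)) (hhd : Injective hd) (i : ι) :
    unshear lvl tl hd c hlt (hd i) =
      (c i)⁻¹ • (MvPolynomial.X i - unshear lvl tl hd c hlt (tl i)) := by
  have h : ∃ j, hd j = hd i := ⟨i, rfl⟩
  rw [unshear, dif_pos h, hhd h.choose_spec]

theorem algebraicIndependent_X_add_smul_X {lvl : V → ℕ} {tl hd : ι → V} {c : ι → K}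
    (hc : ∀ i, c i ≠ 0) (hhd : Injective hd) (hlt : ∀ i, lvl (tl i) < lvl (hd i)) :
    AlgebraicIndependent K
      (fun i => (MvPolynomial.X (tl i) + c i • MvPolynomial.X (hd i) : MvPolynomial V K)) := by
  refine LeftInverse.injective (g := aeval (unshear lvl tl hd c hlt)) fun P => ?_
  rw [MvPolynomial.comp_aeval_apply]
  convert aeval_X_left_apply P with i
  simp [unshear_hd lvl tl c hlt hhd, smul_smul, hc i]

end Shear

theorem AlgebraicIndependent.adjoin_image_inf_adjoin_image_eq_bot {R A ι : Type*} [CommRing R]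
    [CommRing A] [Algebra R A] {x : ι → A} (hx : AlgebraicIndependent R x) {s t : Set ι}
    (hst : Disjoint s t) : Algebra.adjoin R (x '' s) ⊓ Algebra.adjoin R (x '' t) = ⊥ := by
  have adjoin_eq : ∀ u : Set ι, Algebra.adjoin R (x '' u) = (supported R u).map (aeval x) := by
    intro u
    rw [supported_eq_adjoin_X, AlgHom.map_adjoin, image_image]
    simp
  have supported_inf : supported R s ⊓ supported R t = supported R (s ∩ t) := by
    ext p
    simp only [Algebra.mem_inf, mem_supported, subset_inter_iff]
  rw [adjoin_eq, adjoin_eq, ← Algebra.map_inf _ hx, supported_inf, hst.inter_eq,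
    supported_empty, Algebra.map_bot]

theorem MvPolynomial.constantCoeff_eq_zero_of_aeval_inr_eq_zero {R A ι : Type*} [CommSemiring R]
    [NonUnitalCommSemiring A] [Module R A] [IsScalarTower R A A] [SMulCommClass R A A]
    {x : ι → A} {P : MvPolynomial ι R} (hP : aeval (fun i => (x i : Unitization R A)) P = 0) :
    constantCoeff P = 0 := by
  have := congrArg (Unitization.fstHom R A) hP
  rw [comp_aeval_apply, map_zero] at this
  simpa using this

theorem Unitization.inr_mem_adjoin_image {R A : Type*} [CommSemiring R] [NonUnitalSemiring A]
    [Module R A] [IsScalarTower R A A] [SMulCommClass R A A] {s : Set A} {z : A}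
    (hz : z ∈ NonUnitalAlgebra.adjoin R s) :
    (z : Unitization R A) ∈ Algebra.adjoin R (Unitization.inr '' s) := by
  have : NonUnitalAlgebra.adjoin R s ≤
      (Algebra.adjoin R (Unitization.inr '' s)).toNonUnitalSubalgebra.comap
        (Unitization.inrNonUnitalAlgHom R A) :=
    NonUnitalAlgebra.adjoin_le fun a ha => Algebra.subset_adjoin ⟨a, ha, rfl⟩
  exact this hz

theorem isSFG_iff_algebraicIndependent {S : Set X} :
    IsSFG 𝕜 S ↔ AlgebraicIndependent 𝕜 (fun s : S => (s : Unitization 𝕜 X)) := by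
  constructor
  · refine fun hS => algebraicIndependent_of_finite_type fun t ht => ?_
    have := ht.to_subtype
    let e := Finite.equivFin t
    refine (algebraicIndependent_equiv e.symm).mp (algebraicIndependent_iff.mpr fun P hP => ?_)
    by_contra hP0
    refine hS _ (fun i => ((e.symm i : t) : S)) (fun i => ((e.symm i : t) : S).2)
      (Subtype.val_injective.comp (Subtype.val_injective.comp e.symm.injective)) P hP0 ?_ hP
    exact MvPolynomial.constantCoeff_eq_zero_of_aeval_inr_eq_zero hP
  · intro hS n x hxS hx P hP _ hP0
    have hS' := hS.comp (fun i => ⟨x i, hxS i⟩) fun i j h => hx (congrArg Subtype.val h)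
    exact hP (hS'.eq_zero_of_aeval_eq_zero P hP0)

theorem isSFG_range {ι : Type*} {x : ι → X}
    (hx : AlgebraicIndependent 𝕜 (fun i => (x i : Unitization 𝕜 X))) : IsSFG 𝕜 (range x) := by
  have hinj : Injective x := fun i j h => hx.injective (congrArg Unitization.inr h)
  exact (isSFG_iff_algebraicIndependent 𝕜).mpr <|
    (algebraicIndependent_equiv' (Equiv.ofInjective x hinj) rfl).mp hx

theorem NonUnitalAlgebra.adjoin_image_inf_adjoin_image_eq_bot {ι : Type*} {x : ι → X}
    (hx : AlgebraicIndependent 𝕜 (fun i => (x i : Unitization 𝕜 X))) {s t : Set ι}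
    (hst : Disjoint s t) :
    NonUnitalAlgebra.adjoin 𝕜 (x '' s) ⊓ NonUnitalAlgebra.adjoin 𝕜 (x '' t) = ⊥ := by
  refine eq_bot_iff.mpr fun z hz => ?_
  obtain ⟨hzs, hzt⟩ := NonUnitalAlgebra.mem_inf.mp hz
  have hz' : (z : Unitization 𝕜 X) ∈
      Algebra.adjoin 𝕜 ((fun i => (x i : Unitization 𝕜 X)) '' s) ⊓
        Algebra.adjoin 𝕜 ((fun i => (x i : Unitization 𝕜 X)) '' t) := by
    rw [← image_image Unitization.inr x s, ← image_image Unitization.inr x t]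
    exact ⟨Unitization.inr_mem_adjoin_image hzs, Unitization.inr_mem_adjoin_image hzt⟩
  rw [hx.adjoin_image_inf_adjoin_image_eq_bot hst, Algebra.mem_bot] at hz'
  obtain ⟨k, hk⟩ := hz'
  have hk0 : k = 0 := by simpa using congrArg (Unitization.fstHom 𝕜 X) hk
  subst hk0
  exact mem_bot.mpr (Unitization.inr_injective (R := 𝕜) (by simpa using hk.symm))

theorem exists_ne_zero_smul_tendsto_zero {K E : Type*} [NontriviallyNormedField K]
    [TopologicalSpace E] [Zero E] [SMulWithZero K E] [ContinuousSMul K E]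
    [FirstCountableTopology E] (y : ℕ → E) :
    ∃ t : ℕ → K, (∀ n, t n ≠ 0) ∧ Tendsto (fun n => t n • y n) atTop (𝓝 0) := by
  obtain ⟨U, hU⟩ := (𝓝 (0 : E)).exists_antitone_basis
  have small : ∀ n, ∃ c : K, c ≠ 0 ∧ c • y n ∈ U n := fun n => by
    have hcont : Tendsto (fun c : K => c • y n) (𝓝 0) (𝓝 0) :=
      (continuous_id.smul continuous_const).tendsto' 0 0 (zero_smul K (y n))
    obtain ⟨c, hcU, hc0⟩ := (((hcont.mono_left nhdsWithin_le_nhds).eventually (hU.mem n)).and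
      (self_mem_nhdsWithin : {0}ᶜ ∈ 𝓝[≠] (0 : K))).exists
    exact ⟨c, hc0, hcU⟩
  choose t ht0 htU using small
  exact ⟨t, ht0, hU.tendsto htU⟩

theorem exists_injective_level_lt {ι V : Type u} [Infinite V] (h : #ι ≤ #V) :
    ∃ (lvl : V → ℕ) (hd : ι × V → V), Injective hd ∧ ∀ p, lvl p.2 < lvl (hd p) := by
  obtain ⟨E⟩ : Nonempty (V ≃ V × ℕ) :=
    Cardinal.eq.mp (by simp [Cardinal.mul_aleph0_eq (Cardinal.aleph0_le_mk V)])
  obtain ⟨e⟩ : Nonempty (ι × V ↪ V) := by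
    refine Cardinal.le_def _ _ |>.mp ?_
    calc #(ι × V) = #ι * #V := by simp
      _ ≤ #V * #V := by gcongr
      _ = #V := Cardinal.mul_eq_self (Cardinal.aleph0_le_mk V)
  refine ⟨fun v => (E v).2, fun p => E.symm (e (p.1, (E p.2).1), (E p.2).2 + 1), ?_,
    fun p => by simp⟩
  rintro ⟨i, v⟩ ⟨j, w⟩ h
  simp only [E.symm.injective.eq_iff, Prod.mk.injEq, e.injective.eq_iff, add_left_inj] at h
  obtain ⟨⟨rfl, h1⟩, h2⟩ := h
  rw [E.injective (Prod.ext h1 h2)]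

theorem dense_adjoin_of_subset_closure {R A : Type*} [CommSemiring R] [NonUnitalSemiring A]
    [Module R A] [IsScalarTower R A A] [SMulCommClass R A A] [TopologicalSpace A]
    [IsSemitopologicalSemiring A] [ContinuousConstSMul R A] {s t : Set A}
    (hs : Dense (NonUnitalAlgebra.adjoin R s : Set A))
    (hst : s ⊆ closure (NonUnitalAlgebra.adjoin R t : Set A)) :
    Dense (NonUnitalAlgebra.adjoin R t : Set A) := by
  have : NonUnitalAlgebra.adjoin R s ≤ (NonUnitalAlgebra.adjoin R t).topologicalClosure :=
    NonUnitalAlgebra.adjoin_le hst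
  exact dense_closure.mp (hs.mono this)

theorem IsSFG.exists_free_perturbation [TopologicalSpace X] [ContinuousAdd X]
    [ContinuousSMul 𝕜 X] [FirstCountableTopology X] {F : Set X} [Infinite F] (hF : IsSFG 𝕜 F) :
    ∃ g : (F × ℕ) × F → X, AlgebraicIndependent 𝕜 (fun r => (g r : Unitization 𝕜 X)) ∧
      (∀ r, g r ∈ NonUnitalAlgebra.adjoin 𝕜 F) ∧
      ∀ κ v, Tendsto (fun n => g ((κ, n), v)) atTop (𝓝 v) := by
  obtain ⟨lvl, hd, hhd, hlt⟩ := exists_injective_level_lt (ι := F × ℕ) (V := F)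
    (by simp [Cardinal.mul_aleph0_eq (Cardinal.aleph0_le_mk F)])
  choose t ht0 ht using fun κ v : F =>
    exists_ne_zero_smul_tendsto_zero (K := 𝕜) fun n => (hd ((κ, n), v) : X)
  refine ⟨fun r => r.2 + t r.1.1 r.2 r.1.2 • hd r, ?_, fun r => ?_, fun κ v => ?_⟩
  · have := (algebraicIndependent_X_add_smul_X (tl := Prod.snd)
      (c := fun r => t r.1.1 r.2 r.1.2) (fun r => ht0 _ _ _) hhd hlt).map'
        ((isSFG_iff_algebraicIndependent 𝕜).mp hF)
    convert this using 1
    funext r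
    simp
  · exact add_mem (NonUnitalAlgebra.subset_adjoin 𝕜 r.2.2)
      (SMulMemClass.smul_mem _ (NonUnitalAlgebra.subset_adjoin 𝕜 (hd r).2))
  · simpa using (ht κ v).const_add (v : X)

theorem InfStronglyDenseAlgebrable.stronglyDenseAlgebrable [TopologicalSpace X] {M : Set X}
    {α β : Cardinal} (h : InfStronglyDenseAlgebrable 𝕜 M α β) (hα : α ≠ 0) :
    StronglyDenseAlgebrable 𝕜 M β := by
  obtain ⟨ι, F, hι, hF, -⟩ := h
  obtain ⟨i⟩ := Cardinal.mk_ne_zero_iff.mp (hι ▸ hα)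
  exact ⟨F i, hF i⟩

theorem StronglyDenseAlgebrable.infStronglyDenseAlgebrable [TopologicalSpace X]
    [IsTopologicalRing X] [ContinuousSMul 𝕜 X] [FirstCountableTopology X] {M : Set X}
    {α : Cardinal} (hα : ℵ₀ ≤ α) (h : StronglyDenseAlgebrable 𝕜 M α) :
    InfStronglyDenseAlgebrable 𝕜 M α α := by
  obtain ⟨F, hF, hFα, hdense, hM⟩ := h
  have : Infinite F := Cardinal.infinite_iff.mpr (hFα ▸ hα)
  obtain ⟨g, hg, hgF, hg_tendsto⟩ := hF.exists_free_perturbation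
  let slice (κ : F) : ℕ × F → (F × ℕ) × F := fun p => ((κ, p.1), p.2)
  have hslice (κ : F) : Injective (slice κ) := fun p q h => by
    simp only [slice, Prod.mk.injEq, true_and] at h
    exact Prod.ext h.1 h.2
  have hg_inj : Injective g := fun r r' h => hg.injective (congrArg _ h)
  refine ⟨F, fun κ => range (g ∘ slice κ), hFα, fun κ => ⟨?_, ?_, ?_, ?_⟩, fun κ κ' hκ => ?_⟩
  · exact isSFG_range 𝕜 (hg.comp _ (hslice κ))
  · rw [Cardinal.mk_range_eq _ (hg_inj.comp (hslice κ)), Cardinal.mk_prod, Cardinal.lift_id,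
      Cardinal.lift_id, Cardinal.mk_nat, hFα, Cardinal.aleph0_mul_eq hα]
  · refine dense_adjoin_of_subset_closure hdense fun v hv => ?_
    exact mem_closure_of_tendsto (hg_tendsto κ ⟨v, hv⟩)
      (Eventually.of_forall fun n => NonUnitalAlgebra.subset_adjoin 𝕜 ⟨(n, ⟨v, hv⟩), rfl⟩)
  · exact fun z hz =>
      hM (NonUnitalAlgebra.adjoin_le (range_subset_iff.mpr fun p => hgF _) hz)
  · simp only [range_comp]
    refine NonUnitalAlgebra.adjoin_image_inf_adjoin_image_eq_bot 𝕜 hg (disjoint_left.mpr ?_)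
    rintro _ ⟨p, rfl⟩ ⟨q, hq⟩
    exact hκ (congrArg (fun r => r.1.1) hq).symm

theorem stmt17 [TopologicalSpace X] [IsTopologicalRing X] [ContinuousSMul 𝕜 X]
    [FirstCountableTopology X] (M : Set X) (α : Cardinal)
    (hinf : Cardinal.aleph0 ≤ α) :
    InfStronglyDenseAlgebrable 𝕜 M α α ↔ StronglyDenseAlgebrable 𝕜 M α :=
  ⟨fun h => h.stronglyDenseAlgebrable 𝕜 (Cardinal.aleph0_pos.trans_le hinf).ne',
    fun h => h.infStronglyDenseAlgebrable 𝕜 hinf⟩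
end
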